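/- arXiv:2304.00874 — 8 statements merged into one kernel-verified Lean document; each statement's English description precedes it below -/
import Mathlib

section
/- Let g be a circular density and m a positive integer such that ∫_{−π}^{π} cos(ms) g(s) ds = ρ cos μ and ∫_{−π}^{π} sin(ms) g(s) ds = ρ sin μ for some ρ ≥ 0 and μ ∈ ℝ. Then for every q ∈ {−1, 1} and every θ' ∈ ℝ, ∫_{−π}^{π} [[cos(mθ), sin(mθ)],[sin(mθ), −cos(mθ)]] g(θ − qθ') dθ = D(ρ,μ) Q(q) [[cos(mθ'), sin(mθ')],[sin(mθ'), −cos(mθ')]] Q(q), where the integral of a matrix-valued function is taken entrywise. -/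
set_option maxHeartbeats 1000000


open Real MeasureTheory

/-- `D(ρ,μ) = ρ·[[cos μ, −sin μ],[sin μ, cos μ]]`. -/
noncomputable def Dmat (ρ μ : ℝ) : Matrix (Fin 2) (Fin 2) ℝ :=
  ρ • !![Real.cos μ, -Real.sin μ; Real.sin μ, Real.cos μ]

/-- `Q(q) = diag(1, q)`. -/
def Qmat (q : ℝ) : Matrix (Fin 2) (Fin 2) ℝ := !![1, 0; 0, q]

theorem stmt1 (g : ℝ → ℝ) (hmeas : Measurable g) (hnonneg : ∀ x, 0 ≤ g x)
    (hper : ∀ x, g (x + 2 * π) = g x) (hint : (∫ s in (-π)..π, g s) = 1)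
    (m : ℕ) (hm : 0 < m) (ρ μ : ℝ) (hρ : 0 ≤ ρ)
    (hcos : (∫ s in (-π)..π, Real.cos (m * s) * g s) = ρ * Real.cos μ)
    (hsin : (∫ s in (-π)..π, Real.sin (m * s) * g s) = ρ * Real.sin μ)
    (q : ℝ) (hq : q = 1 ∨ q = -1) (θ' : ℝ) :
    (Matrix.of fun i j => ∫ θ in (-π)..π,
        (!![Real.cos (m * θ), Real.sin (m * θ);
            Real.sin (m * θ), -Real.cos (m * θ)] i j) * g (θ - q * θ')) =
      Dmat ρ μ * Qmat q *
        !![Real.cos (m * θ'), Real.sin (m * θ');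
           Real.sin (m * θ'), -Real.cos (m * θ')] * Qmat q := by
  -- g is interval integrable on [-π, π]
  have hgI : IntervalIntegrable g volume (-π) π := by
    by_contra h
    rw [intervalIntegral.integral_undef h] at hint
    exact one_ne_zero hint.symm
  set c : ℝ := q * θ' with hc
  -- key translation lemma
  have key : ∀ F : ℝ → ℝ, Function.Periodic F (2 * π) →
      (∫ θ in (-π)..π, F (θ - c)) = ∫ s in (-π)..π, F s := by
    intro F hF
    rw [intervalIntegral.integral_comp_sub_right]
    have h := hF.intervalIntegral_add_eq (-π - c) (-π)
    have h1 : (-π - c) + 2 * π = π - c := by ring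
    have h2 : (-π : ℝ) + 2 * π = π := by ring
    rw [h1, h2] at h
    exact h
  have hFper : ∀ φ : ℝ, Function.Periodic (fun s => Real.cos (m * s + φ) * g s) (2 * π) := by
    intro φ s
    simp only [hper]
    congr 1
    have : (m : ℝ) * (s + 2 * π) + φ = (m * s + φ) + m * (2 * π) := by ring
    rw [this, Real.cos_add_nat_mul_two_pi]
  have hGper : ∀ φ : ℝ, Function.Periodic (fun s => Real.sin (m * s + φ) * g s) (2 * π) := by
    intro φ s
    simp only [hper]
    congr 1
    have : (m : ℝ) * (s + 2 * π) + φ = (m * s + φ) + m * (2 * π) := by ring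
    rw [this, Real.sin_add_nat_mul_two_pi]
  -- integrability of trig * g
  have hcosI : IntervalIntegrable (fun s => Real.cos (m * s) * g s) volume (-π) π :=
    hgI.continuousOn_mul (Continuous.continuousOn (by continuity))
  have hsinI : IntervalIntegrable (fun s => Real.sin (m * s) * g s) volume (-π) π :=
    hgI.continuousOn_mul (Continuous.continuousOn (by continuity))
  -- shifted integrals
  have keycos : ∀ φ : ℝ, (∫ s in (-π)..π, Real.cos (m * s + φ) * g s)
      = Real.cos φ * (ρ * Real.cos μ) - Real.sin φ * (ρ * Real.sin μ) := by
    intro φ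
    rw [← hcos, ← hsin]
    have : ∀ s : ℝ, Real.cos (m * s + φ) * g s
        = Real.cos φ * (Real.cos (m * s) * g s) - Real.sin φ * (Real.sin (m * s) * g s) := by
      intro s; rw [Real.cos_add]; ring
    simp_rw [this]
    rw [intervalIntegral.integral_sub (hcosI.const_mul _) (hsinI.const_mul _),
      intervalIntegral.integral_const_mul, intervalIntegral.integral_const_mul]
  have keysin : ∀ φ : ℝ, (∫ s in (-π)..π, Real.sin (m * s + φ) * g s)
      = Real.cos φ * (ρ * Real.sin μ) + Real.sin φ * (ρ * Real.cos μ) := by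
    intro φ
    rw [← hcos, ← hsin]
    have : ∀ s : ℝ, Real.sin (m * s + φ) * g s
        = Real.cos φ * (Real.sin (m * s) * g s) + Real.sin φ * (Real.cos (m * s) * g s) := by
      intro s; rw [Real.sin_add]; ring
    simp_rw [this]
    rw [intervalIntegral.integral_add (hsinI.const_mul _) (hcosI.const_mul _),
      intervalIntegral.integral_const_mul, intervalIntegral.integral_const_mul]
  -- the two basic integrals
  have hC : (∫ θ in (-π)..π, Real.cos (m * θ) * g (θ - c))
      = Real.cos (m * c) * (ρ * Real.cos μ) - Real.sin (m * c) * (ρ * Real.sin μ) := by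
    have heq : ∀ θ : ℝ, Real.cos (m * θ) * g (θ - c)
        = (fun s => Real.cos (m * s + m * c) * g s) (θ - c) := by
      intro θ; simp only []; congr 2; ring
    calc (∫ θ in (-π)..π, Real.cos (m * θ) * g (θ - c))
        = ∫ θ in (-π)..π, (fun s => Real.cos (m * s + m * c) * g s) (θ - c) := by
          simp_rw [heq]
      _ = ∫ s in (-π)..π, Real.cos (m * s + m * c) * g s := key _ (hFper _)
      _ = _ := keycos _
  have hS : (∫ θ in (-π)..π, Real.sin (m * θ) * g (θ - c))
      = Real.cos (m * c) * (ρ * Real.sin μ) + Real.sin (m * c) * (ρ * Real.cos μ) := by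
    have heq : ∀ θ : ℝ, Real.sin (m * θ) * g (θ - c)
        = (fun s => Real.sin (m * s + m * c) * g s) (θ - c) := by
      intro θ; simp only []; congr 2; ring
    calc (∫ θ in (-π)..π, Real.sin (m * θ) * g (θ - c))
        = ∫ θ in (-π)..π, (fun s => Real.sin (m * s + m * c) * g s) (θ - c) := by
          simp_rw [heq]
      _ = ∫ s in (-π)..π, Real.sin (m * s + m * c) * g s := key _ (hGper _)
      _ = _ := keysin _
  -- trig of m*c in terms of θ'
  have hcc : Real.cos (m * c) = Real.cos (m * θ') ∧ Real.sin (m * c) = q * Real.sin (m * θ') := by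
    rcases hq with h | h <;> subst h <;>
      constructor <;> simp [hc] <;> ring_nf <;> simp [Real.cos_neg, Real.sin_neg, mul_comm]
  obtain ⟨hc1, hs1⟩ := hcc
  ext i j
  fin_cases i <;> fin_cases j <;>
    simp only [Fin.mk_zero, Fin.mk_one, Matrix.of_apply, Matrix.cons_val', Matrix.cons_val_zero, Matrix.cons_val_one,
      Matrix.head_cons, Matrix.head_fin_const, Matrix.empty_val', Matrix.cons_val_fin_one,
      Dmat, Qmat, Matrix.smul_mul, Matrix.mul_apply, Fin.sum_univ_two, Matrix.smul_apply,
      smul_eq_mul, neg_mul, mul_neg]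
  · rw [hC, hc1, hs1]; ring
  · rw [hS, hc1, hs1]; rcases hq with h | h <;> subst h <;> ring
  · rw [hS, hc1, hs1]; ring
  · have : (∫ θ in (-π)..π, -(Real.cos (m * θ) * g (θ - c)))
        = -(∫ θ in (-π)..π, Real.cos (m * θ) * g (θ - c)) :=
      intervalIntegral.integral_neg
    rw [this, hC, hc1, hs1]; rcases hq with h | h <;> subst h <;> ring
end

section
/- Let g be a circular density with first trigonometric moment ∫_{−π}^{π} e^{is} g(s) ds = ρ e^{iμ} (ρ ≥ 0, μ ∈ ℝ), let p ≥ 1, let a₁,…,a_p ≥ 0 with a₁ + ⋯ + a_p = 1, and let q₁,…,q_p ∈ {−1,1}. Then for all θ₁,…,θ_p ∈ ℝ, the first conditional trigonometric moment of the MTD transition density satisfies ∫_{−π}^{π} (cos θ, sin θ)ᵀ · (Σ_{i=1}^{p} a_i g(θ − q_i θ_i)) dθ = Σ_{i=1}^{p} a_i D(ρ,μ) Q(q_i) (cos θ_i, sin θ_i)ᵀ. -/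
open Real MeasureTheory

/-- A `2π`-periodic function integrable on `[-π, π]` is integrable on any period window. -/
lemma periodic_intervalIntegrable {f : ℝ → ℝ}
    (hper : Function.Periodic f (2 * π))
    (hf : IntervalIntegrable f volume (-π) π) (t : ℝ) :
    IntervalIntegrable f volume t (t + 2 * π) := by
  have h2π : (0:ℝ) < 2 * π := by positivity
  set k : ℤ := ⌊(t + π) / (2 * π)⌋ with hk
  have h1 : (k : ℝ) ≤ (t + π) / (2 * π) := Int.floor_le _
  have h2 : (t + π) / (2 * π) < k + 1 := Int.lt_floor_add_one _
  have hlb : -π + 2 * π * k ≤ t := by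
    have := (le_div_iff₀ h2π).mp h1
    linarith
  have hub : t + 2 * π ≤ 3 * π + 2 * π * k := by
    have := (div_lt_iff₀ h2π).mp h2
    linarith
  have hshift : ∀ m : ℤ, IntervalIntegrable f volume (-π + 2 * π * m) (π + 2 * π * m) := by
    intro m
    have := hf.comp_sub_right (2 * π * m)
    have heq : (fun x => f (x - 2 * π * m)) = f := by
      funext x
      have := hper.sub_zsmul_eq m (x := x)
      simpa [zsmul_eq_mul, mul_comm, mul_left_comm] using this
    rw [heq] at this
    simpa [add_comm] using this
  have hA := hshift k
  have hB := hshift (k + 1)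
  have hB' : IntervalIntegrable f volume (π + 2 * π * k) (3 * π + 2 * π * k) := by
    have e1 : -π + 2 * π * ((k : ℝ) + 1) = π + 2 * π * k := by ring
    have e2 : π + 2 * π * ((k : ℝ) + 1) = 3 * π + 2 * π * k := by ring
    rw [Int.cast_add, Int.cast_one, e1, e2] at hB
    exact hB
  have htrans : IntervalIntegrable f volume (-π + 2 * π * k) (3 * π + 2 * π * k) :=
    hA.trans hB'
  apply htrans.mono_set
  rw [Set.uIcc_of_le (by linarith), Set.uIcc_of_le (by linarith : (-π + 2*π*k : ℝ) ≤ 3*π + 2*π*k)]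
  exact Set.Icc_subset_Icc hlb hub

theorem stmt2 (g : ℝ → ℝ) (hmeas : Measurable g) (hnonneg : ∀ x, 0 ≤ g x)
    (hper : ∀ x, g (x + 2 * π) = g x) (hint : (∫ s in (-π)..π, g s) = 1)
    (ρ μ : ℝ) (hρ : 0 ≤ ρ)
    (hmom : (∫ s in (-π)..π, (g s : ℂ) * Complex.exp ((s : ℂ) * Complex.I)) =
      (ρ : ℂ) * Complex.exp ((μ : ℂ) * Complex.I))
    (p : ℕ) (hp : 1 ≤ p) (a : Fin p → ℝ) (ha : ∀ i, 0 ≤ a i) (hsum : ∑ i, a i = 1)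
    (q : Fin p → ℝ) (hq : ∀ i, q i = 1 ∨ q i = -1) (θv : Fin p → ℝ) :
    (fun i => ∫ θ in (-π)..π,
        ![Real.cos θ, Real.sin θ] i * (∑ j, a j * g (θ - q j * θv j))) =
      ∑ j, a j • (Dmat ρ μ * Qmat (q j)).mulVec ![Real.cos (θv j), Real.sin (θv j)] := by
  have hP : Function.Periodic g (2 * π) := hper
  -- integrability of g on the base interval
  have hgint : IntervalIntegrable g volume (-π) π := by
    by_contra h
    rw [intervalIntegral.integral_undef h] at hint
    norm_num at hint
  have hcos : IntervalIntegrable (fun s => g s * Real.cos s) volume (-π) π :=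
    hgint.mul_continuousOn Real.continuous_cos.continuousOn
  have hsin : IntervalIntegrable (fun s => g s * Real.sin s) volume (-π) π :=
    hgint.mul_continuousOn Real.continuous_sin.continuousOn
  -- extraction of real moments
  have hA : IntervalIntegrable (fun s => ((g s * Real.cos s : ℝ) : ℂ)) volume (-π) π :=
    ⟨hcos.1.ofReal, hcos.2.ofReal⟩
  have hB : IntervalIntegrable (fun s => ((g s * Real.sin s : ℝ) : ℂ) * Complex.I)
      volume (-π) π := IntervalIntegrable.mul_const ⟨hsin.1.ofReal, hsin.2.ofReal⟩ Complex.I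
  have h1 : (∫ s in (-π)..π, (g s : ℂ) * Complex.exp ((s : ℂ) * Complex.I)) =
      ((∫ s in (-π)..π, g s * Real.cos s : ℝ) : ℂ) +
      ((∫ s in (-π)..π, g s * Real.sin s : ℝ) : ℂ) * Complex.I := by
    have e0 : (∫ s in (-π)..π, (g s : ℂ) * Complex.exp ((s : ℂ) * Complex.I)) =
        ∫ s in (-π)..π, (((g s * Real.cos s : ℝ) : ℂ) +
          ((g s * Real.sin s : ℝ) : ℂ) * Complex.I) := by
      apply intervalIntegral.integral_congr
      intro s _
      simp only [Complex.exp_mul_I, ← Complex.ofReal_cos, ← Complex.ofReal_sin]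
      push_cast
      ring
    rw [e0, intervalIntegral.integral_add hA hB, intervalIntegral.integral_mul_const,
      intervalIntegral.integral_ofReal, intervalIntegral.integral_ofReal]
  have h2 : ((∫ s in (-π)..π, g s * Real.cos s : ℝ) : ℂ) +
      ((∫ s in (-π)..π, g s * Real.sin s : ℝ) : ℂ) * Complex.I =
      (ρ : ℂ) * Complex.exp ((μ : ℂ) * Complex.I) := h1 ▸ hmom
  rw [Complex.exp_mul_I, ← Complex.ofReal_cos, ← Complex.ofReal_sin] at h2
  have h3 := (Complex.ext_iff).mp h2
  simp only [Complex.add_re, Complex.add_im, Complex.ofReal_re, Complex.ofReal_im,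
    Complex.mul_re, Complex.mul_im, Complex.I_re, Complex.I_im] at h3
  have hre : (∫ s in (-π)..π, g s * Real.cos s) = ρ * Real.cos μ := by
    have := h3.1; simpa using this
  have him : (∫ s in (-π)..π, g s * Real.sin s) = ρ * Real.sin μ := by
    have := h3.2; simpa using this
  -- integrability of shifted g
  have hgshift : ∀ c : ℝ, IntervalIntegrable (fun θ => g (θ - c)) volume (-π) π := by
    intro c
    have h0 : IntervalIntegrable g volume (-π - c) (-π - c + 2 * π) :=
      periodic_intervalIntegrable hP hgint (-π - c)
    have := h0.comp_sub_right c
    have e1 : -π - c + c = -π := by ring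
    have e2 : -π - c + 2 * π + c = π := by ring
    rwa [e1, e2] at this
  -- the key shift identities
  have hshift : ∀ c : ℝ,
      (∫ θ in (-π)..π, Real.cos θ * g (θ - c)) = ρ * Real.cos (μ + c) ∧
      (∫ θ in (-π)..π, Real.sin θ * g (θ - c)) = ρ * Real.sin (μ + c) := by
    intro c
    have hPc : Function.Periodic (fun x => Real.cos (x + c) * g x) (2 * π) := by
      intro x
      simp only
      rw [show x + 2 * π + c = (x + c) + 2 * π by ring, Real.cos_add_two_pi, hper]
    have hPs : Function.Periodic (fun x => Real.sin (x + c) * g x) (2 * π) := by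
      intro x
      simp only
      rw [show x + 2 * π + c = (x + c) + 2 * π by ring, Real.sin_add_two_pi, hper]
    have key : ∀ (F : ℝ → ℝ), Function.Periodic (fun x => F (x + c) * g x) (2 * π) →
        (∫ θ in (-π)..π, F θ * g (θ - c)) = ∫ x in (-π)..π, F (x + c) * g x := by
      intro F hF
      have e1 : (∫ θ in (-π)..π, F θ * g (θ - c)) =
          ∫ x in (-π - c)..(π - c), F (x + c) * g x := by
        rw [← intervalIntegral.integral_comp_sub_right (fun x => F (x + c) * g x) c]
        apply intervalIntegral.integral_congr
        intro θ _
        simp [sub_add_cancel]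
      rw [e1]
      have := hF.intervalIntegral_add_eq (-π - c) (-π)
      have e2 : -π - c + 2 * π = π - c := by ring
      have e3 : -π + 2 * π = π := by ring
      rwa [e2, e3] at this
    constructor
    · rw [key Real.cos hPc]
      have : (∫ x in (-π)..π, Real.cos (x + c) * g x) =
          ∫ x in (-π)..π, (Real.cos c * (g x * Real.cos x) - Real.sin c * (g x * Real.sin x)) := by
        apply intervalIntegral.integral_congr
        intro x _
        simp only [Real.cos_add]; ring
      rw [this, intervalIntegral.integral_sub ((hcos.const_mul _)) ((hsin.const_mul _)),
        intervalIntegral.integral_const_mul, intervalIntegral.integral_const_mul, hre, him,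
        Real.cos_add]
      ring
    · rw [key Real.sin hPs]
      have : (∫ x in (-π)..π, Real.sin (x + c) * g x) =
          ∫ x in (-π)..π, (Real.cos c * (g x * Real.sin x) + Real.sin c * (g x * Real.cos x)) := by
        apply intervalIntegral.integral_congr
        intro x _
        simp only [Real.sin_add]; ring
      rw [this, intervalIntegral.integral_add ((hsin.const_mul _)) ((hcos.const_mul _)),
        intervalIntegral.integral_const_mul, intervalIntegral.integral_const_mul, hre, him,
        Real.sin_add]
      ring
  -- now the main computation
  funext i
  fin_cases i
  · -- cosine component
    have hLHS : (∫ θ in (-π)..π, Real.cos θ * (∑ j, a j * g (θ - q j * θv j))) =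
        ∑ j, a j * (ρ * Real.cos (μ + q j * θv j)) := by
      have : ∀ θ : ℝ, Real.cos θ * (∑ j, a j * g (θ - q j * θv j)) =
          ∑ j, a j * (Real.cos θ * g (θ - q j * θv j)) := by
        intro θ; rw [Finset.mul_sum]; apply Finset.sum_congr rfl; intros; ring
      simp_rw [this]
      rw [intervalIntegral.integral_finset_sum]
      · apply Finset.sum_congr rfl
        intro j _
        rw [intervalIntegral.integral_const_mul, (hshift (q j * θv j)).1]
      · intro j _
        exact (((hgshift (q j * θv j)).continuousOn_mul
          Real.continuous_cos.continuousOn).const_mul (a j))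
    show (∫ θ in (-π)..π, Real.cos θ * (∑ j, a j * g (θ - q j * θv j))) =
        (∑ j, a j • (Dmat ρ μ * Qmat (q j)).mulVec ![Real.cos (θv j), Real.sin (θv j)]) 0
    rw [hLHS]
    rw [Finset.sum_apply]
    apply Finset.sum_congr rfl
    intro j _
    have : ((Dmat ρ μ * Qmat (q j)).mulVec ![Real.cos (θv j), Real.sin (θv j)]) 0 =
        ρ * (Real.cos μ * Real.cos (θv j) - Real.sin μ * (q j * Real.sin (θv j))) := by
      simp [Dmat, Qmat, Matrix.mulVec, Matrix.mul_apply, dotProduct,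
        Fin.sum_univ_two, Matrix.smul_apply]
      ring
    rw [Pi.smul_apply, this, smul_eq_mul]
    rcases hq j with h | h <;> rw [h] <;> simp [Real.cos_add] <;> ring
  · -- sine component
    have hLHS : (∫ θ in (-π)..π, Real.sin θ * (∑ j, a j * g (θ - q j * θv j))) =
        ∑ j, a j * (ρ * Real.sin (μ + q j * θv j)) := by
      have : ∀ θ : ℝ, Real.sin θ * (∑ j, a j * g (θ - q j * θv j)) =
          ∑ j, a j * (Real.sin θ * g (θ - q j * θv j)) := by
        intro θ; rw [Finset.mul_sum]; apply Finset.sum_congr rfl; intros; ring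
      simp_rw [this]
      rw [intervalIntegral.integral_finset_sum]
      · apply Finset.sum_congr rfl
        intro j _
        rw [intervalIntegral.integral_const_mul, (hshift (q j * θv j)).2]
      · intro j _
        exact (((hgshift (q j * θv j)).continuousOn_mul
          Real.continuous_sin.continuousOn).const_mul (a j))
    show (∫ θ in (-π)..π, Real.sin θ * (∑ j, a j * g (θ - q j * θv j))) =
        (∑ j, a j • (Dmat ρ μ * Qmat (q j)).mulVec ![Real.cos (θv j), Real.sin (θv j)]) 1
    rw [hLHS]
    rw [Finset.sum_apply]
    apply Finset.sum_congr rfl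
    intro j _
    have : ((Dmat ρ μ * Qmat (q j)).mulVec ![Real.cos (θv j), Real.sin (θv j)]) 1 =
        ρ * (Real.sin μ * Real.cos (θv j) + Real.cos μ * (q j * Real.sin (θv j))) := by
      simp [Dmat, Qmat, Matrix.mulVec, Matrix.mul_apply, dotProduct,
        Fin.sum_univ_two, Matrix.smul_apply]
      ring
    rw [Pi.smul_apply, this, smul_eq_mul]
    rcases hq j with h | h <;> rw [h] <;> simp [Real.sin_add] <;> ring
end

section
/- Let g be a circular density with second trigonometric moment ∫_{−π}^{π} e^{2is} g(s) ds = ρ₂ e^{iμ₂} (ρ₂ ≥ 0, μ₂ ∈ ℝ), let p ≥ 1, let a₁,…,a_p ≥ 0 with a₁ + ⋯ + a_p = 1, and let q₁,…,q_p ∈ {−1,1}. Writing U(θ) = (cos θ, sin θ)ᵀ, for all θ₁,…,θ_p ∈ ℝ the second conditional moment of the MTD transition density satisfies ∫_{−π}^{π} U(θ)U(θ)ᵀ · (Σ_{i=1}^{p} a_i g(θ − q_i θ_i)) dθ = ½(I₂ − D(ρ₂,μ₂)) + D(ρ₂,μ₂) Σ_{i=1}^{p} a_i Q(q_i) U(θ_i)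 U(θ_i)ᵀ Q(q_i). -/
/-!
Write `C(z)` (`conjMulMatrix z`) for the matrix of the `ℝ`-linear map `w ↦ z * conj w` of
`ℂ = ℝ²`. Then `U(θ)U(θ)ᵀ = (I₂ + C(e^{2iθ})) / 2`, so the second moment of any integrable `h`
on `[-π, π]` is `((∫ h) I₂ + C(∫ h(θ) e^{2iθ} dθ)) / 2`, which is linear in `h`. For a translate
`g(· - c)`, periodicity gives `∫ g(θ - c) e^{2iθ} dθ = e^{2ic} ρ₂ e^{iμ₂}`, and `D(ρ₂, μ₂)` is the
matrix of multiplication by `ρ₂ e^{iμ₂}`, so `D C(e^{2ic}) = C(ρ₂ e^{iμ₂} e^{2ic})`. Hence the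
component `g(· - c)` has second moment `(I₂ - D)/2 + D U(c)U(c)ᵀ`, and `Q(q) U(θ) = U(qθ)` for
`q = ±1`.
-/

open Real MeasureTheory Matrix

/-- `U(θ)U(θ)ᵀ` where `U(θ) = (cos θ, sin θ)ᵀ`. -/
noncomputable def UU (θ : ℝ) : Matrix (Fin 2) (Fin 2) ℝ :=
  Matrix.vecMulVec ![Real.cos θ, Real.sin θ] ![Real.cos θ, Real.sin θ]

theorem Function.Periodic.intervalIntegral_comp_sub_neg_pi_pi {E : Type*} [NormedAddCommGroup E]
    [NormedSpace ℝ E] {f : ℝ → E} (hf : Function.Periodic f (2 * π)) (c : ℝ) :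
    ∫ x in (-π)..π, f (x - c) = ∫ x in (-π)..π, f x := by
  rw [intervalIntegral.integral_comp_sub_right, show π - c = -π - c + 2 * π by ring,
    hf.intervalIntegral_add_eq (-π - c) (-π), show -π + 2 * π = π by ring]

theorem Function.Periodic.intervalIntegrable_comp_sub {g : ℝ → ℝ}
    (hg : Function.Periodic g (2 * π)) (hi : IntervalIntegrable g volume (-π) π) (c : ℝ) :
    IntervalIntegrable (fun x => g (x - c)) volume (-π) π := by
  have hall := hg.intervalIntegrable (by positivity) (t := -π)
    (by rwa [show -π + 2 * π = π by ring])
  simpa using (hall (-π - c) (π - c)).comp_sub_right c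

theorem integral_comp_sub_mul_exp_two_mul_I {g : ℝ → ℝ} (hg : Function.Periodic g (2 * π))
    (c : ℝ) :
    ∫ θ in (-π)..π, (g (θ - c) : ℂ) * Complex.exp (2 * θ * Complex.I) =
      Complex.exp (2 * c * Complex.I) *
        ∫ θ in (-π)..π, (g θ : ℂ) * Complex.exp (2 * θ * Complex.I) := by
  have hF : Function.Periodic
      (fun x : ℝ => (g x : ℂ) * Complex.exp (2 * ((x + c : ℝ) : ℂ) * Complex.I)) (2 * π) := by
    intro x
    simp only [hg x]
    push_cast
    rw [show 2 * ((x : ℂ) + 2 * π + c) * Complex.I =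
      2 * (x + c) * Complex.I + 2 * π * Complex.I + 2 * π * Complex.I by ring]
    simp only [Complex.exp_add, Complex.exp_two_pi_mul_I, mul_one]
  have := hF.intervalIntegral_comp_sub_neg_pi_pi c
  simp only [sub_add_cancel] at this
  rw [this, ← intervalIntegral.integral_const_mul]
  congr 1 with x
  rw [Complex.ofReal_add, mul_add, add_mul, Complex.exp_add]
  ring

noncomputable def secondMomentMatrix (h : ℝ → ℝ) : Matrix (Fin 2) (Fin 2) ℝ :=
  of fun i j => ∫ θ in (-π)..π, UU θ i j * h θ

noncomputable def conjMulMatrix (z : ℂ) : Matrix (Fin 2) (Fin 2) ℝ :=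
  !![z.re, z.im; z.im, -z.re]

theorem conjMulMatrix_ofReal_mul (r : ℝ) (z : ℂ) :
    conjMulMatrix (r * z) = r • conjMulMatrix z := by
  ext i j
  fin_cases i <;> fin_cases j <;> simp [conjMulMatrix]

theorem Dmat_mul_conjMulMatrix (ρ μ : ℝ) (z : ℂ) :
    Dmat ρ μ * conjMulMatrix z = conjMulMatrix (ρ * Complex.exp (μ * Complex.I) * z) := by
  ext i j
  fin_cases i <;> fin_cases j <;>
    simp [Dmat, conjMulMatrix, Matrix.mul_apply, Fin.sum_univ_two, Complex.mul_re,
      Complex.mul_im, Complex.exp_ofReal_mul_I_re, Complex.exp_ofReal_mul_I_im] <;> ring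

theorem UU_eq_half_smul (θ : ℝ) :
    UU θ = (1 / 2 : ℝ) • (1 + conjMulMatrix (Complex.exp (2 * θ * Complex.I))) := by
  have h : (2 * θ * Complex.I : ℂ) = ((2 * θ : ℝ) : ℂ) * Complex.I := by push_cast; ring
  ext i j
  fin_cases i <;> fin_cases j <;>
    simp [UU, conjMulMatrix, h, Complex.exp_ofReal_mul_I_re, Complex.exp_ofReal_mul_I_im,
      Real.cos_two_mul, Real.sin_two_mul] <;> nlinarith [Real.sin_sq_add_cos_sq θ]

theorem continuous_UU_apply (i j : Fin 2) : Continuous fun θ => UU θ i j := by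
  fin_cases i <;> fin_cases j <;> simp [UU, vecMulVec_apply] <;> fun_prop

theorem continuous_conjMulMatrix_apply (i j : Fin 2) :
    Continuous fun z => conjMulMatrix z i j := by
  fin_cases i <;> fin_cases j <;> simp only [conjMulMatrix] <;> fun_prop

theorem intervalIntegral_conjMulMatrix_apply {f : ℝ → ℂ} {a b : ℝ}
    (hf : IntervalIntegrable f volume a b) (i j : Fin 2) :
    ∫ x in a..b, conjMulMatrix (f x) i j = conjMulMatrix (∫ x in a..b, f x) i j := by
  have hre := intervalIntegral.intervalIntegral_re hf
  have him := intervalIntegral.intervalIntegral_im hf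
  simp only [RCLike.re_to_complex, RCLike.im_to_complex] at hre him
  fin_cases i <;> fin_cases j <;> simp [conjMulMatrix, hre, him, intervalIntegral.integral_neg]

theorem secondMomentMatrix_eq {h : ℝ → ℝ} (hh : IntervalIntegrable h volume (-π) π) :
    secondMomentMatrix h = (1 / 2 : ℝ) • ((∫ θ in (-π)..π, h θ) • 1 +
      conjMulMatrix (∫ θ in (-π)..π, (h θ : ℂ) * Complex.exp (2 * θ * Complex.I))) := by
  have hhC : IntervalIntegrable (fun θ => (h θ : ℂ)) volume (-π) π := ⟨hh.1.ofReal, hh.2.ofReal⟩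
  have hz : IntervalIntegrable (fun θ => (h θ : ℂ) * Complex.exp (2 * θ * Complex.I))
      volume (-π) π :=
    hhC.mul_continuousOn (by fun_prop)
  ext i j
  simp only [secondMomentMatrix, of_apply, Matrix.smul_apply, Matrix.add_apply, smul_eq_mul]
  rw [← intervalIntegral_conjMulMatrix_apply hz]
  simp only [UU_eq_half_smul, conjMulMatrix_ofReal_mul, Matrix.smul_apply, Matrix.add_apply,
    smul_eq_mul]
  rw [← intervalIntegral.integral_mul_const, ← intervalIntegral.integral_add,
    ← intervalIntegral.integral_const_mul]
  · congr 1 with θ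
    ring
  · exact hh.mul_const _
  · exact hh.mul_continuousOn ((continuous_conjMulMatrix_apply i j).comp (by fun_prop)).continuousOn

theorem secondMomentMatrix_sum {ι : Type*} (s : Finset ι) (a : ι → ℝ) {h : ι → ℝ → ℝ}
    (hh : ∀ k ∈ s, IntervalIntegrable (h k) volume (-π) π) :
    secondMomentMatrix (fun θ => ∑ k ∈ s, a k * h k θ) =
      ∑ k ∈ s, a k • secondMomentMatrix (h k) := by
  ext i j
  simp only [secondMomentMatrix, of_apply, Matrix.sum_apply, Matrix.smul_apply, smul_eq_mul,
    Finset.mul_sum, mul_left_comm (UU _ i j)]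
  rw [intervalIntegral.integral_finsetSum fun k hk =>
    (((hh k hk).continuousOn_mul (continuous_UU_apply i j).continuousOn).const_mul (a k))]
  simp only [intervalIntegral.integral_const_mul]

theorem secondMomentMatrix_comp_sub {g : ℝ → ℝ} (hg : Function.Periodic g (2 * π))
    (hi : IntervalIntegrable g volume (-π) π) (hint : ∫ s in (-π)..π, g s = 1) {ρ μ : ℝ}
    (hmom : ∫ s in (-π)..π, (g s : ℂ) * Complex.exp (2 * (s : ℂ) * Complex.I) =
      (ρ : ℂ) * Complex.exp ((μ : ℂ) * Complex.I)) (c : ℝ) :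
    secondMomentMatrix (fun θ => g (θ - c)) =
      (1 / 2 : ℝ) • (1 - Dmat ρ μ) + Dmat ρ μ * UU c := by
  rw [secondMomentMatrix_eq (hg.intervalIntegrable_comp_sub hi c),
    hg.intervalIntegral_comp_sub_neg_pi_pi, hint, integral_comp_sub_mul_exp_two_mul_I hg, hmom,
    UU_eq_half_smul, Matrix.mul_smul, Matrix.mul_add, Matrix.mul_one, Dmat_mul_conjMulMatrix,
    mul_comm, one_smul]
  module

theorem Qmat_mul_UU_mul_Qmat {q : ℝ} (hq : q = 1 ∨ q = -1) (θ : ℝ) :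
    Qmat q * UU θ * Qmat q = UU (q * θ) := by
  ext i j
  rcases hq with rfl | rfl <;> fin_cases i <;> fin_cases j <;>
    simp [Qmat, UU, Matrix.mul_apply, Fin.sum_univ_two, vecHead, vecTail]

theorem stmt3_general (g : ℝ → ℝ)
    (hper : ∀ x, g (x + 2 * π) = g x) (hint : (∫ s in (-π)..π, g s) = 1)
    (ρ₂ μ₂ : ℝ)
    (hmom : (∫ s in (-π)..π, (g s : ℂ) * Complex.exp (2 * (s : ℂ) * Complex.I)) =
      (ρ₂ : ℂ) * Complex.exp ((μ₂ : ℂ) * Complex.I))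
    (p : ℕ) (a : Fin p → ℝ) (hsum : ∑ i, a i = 1)
    (q : Fin p → ℝ) (hq : ∀ i, q i = 1 ∨ q i = -1) (θv : Fin p → ℝ) :
    (Matrix.of fun i j => ∫ θ in (-π)..π,
        UU θ i j * (∑ k, a k * g (θ - q k * θv k))) =
      (1 / 2 : ℝ) • ((1 : Matrix (Fin 2) (Fin 2) ℝ) - Dmat ρ₂ μ₂) +
        Dmat ρ₂ μ₂ * ∑ k, a k • (Qmat (q k) * UU (θv k) * Qmat (q k)) := by
  have hg : Function.Periodic g (2 * π) := hper
  have hi : IntervalIntegrable g volume (-π) π :=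
    intervalIntegral.intervalIntegrable_of_integral_ne_zero (by rw [hint]; exact one_ne_zero)
  calc secondMomentMatrix (fun θ => ∑ k, a k * g (θ - q k * θv k))
      = ∑ k, a k • secondMomentMatrix (fun θ => g (θ - q k * θv k)) :=
        secondMomentMatrix_sum _ a fun k _ => hg.intervalIntegrable_comp_sub hi _
    _ = ∑ k, a k • ((1 / 2 : ℝ) • (1 - Dmat ρ₂ μ₂) + Dmat ρ₂ μ₂ * UU (q k * θv k)) := by
        simp only [secondMomentMatrix_comp_sub hg hi hint hmom]
    _ = _ := by
        simp only [Qmat_mul_UU_mul_Qmat (hq _), smul_add, Finset.sum_add_distrib,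
          ← Finset.sum_smul, hsum, one_smul, Matrix.mul_sum, Matrix.mul_smul]

theorem stmt3 (g : ℝ → ℝ) (hmeas : Measurable g) (hnonneg : ∀ x, 0 ≤ g x)
    (hper : ∀ x, g (x + 2 * π) = g x) (hint : (∫ s in (-π)..π, g s) = 1)
    (ρ₂ μ₂ : ℝ) (hρ₂ : 0 ≤ ρ₂)
    (hmom : (∫ s in (-π)..π, (g s : ℂ) * Complex.exp (2 * (s : ℂ) * Complex.I)) =
      (ρ₂ : ℂ) * Complex.exp ((μ₂ : ℂ) * Complex.I))
    (p : ℕ) (hp : 1 ≤ p) (a : Fin p → ℝ) (ha : ∀ i, 0 ≤ a i) (hsum : ∑ i, a i = 1)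
    (q : Fin p → ℝ) (hq : ∀ i, q i = 1 ∨ q i = -1) (θv : Fin p → ℝ) :
    (Matrix.of fun i j => ∫ θ in (-π)..π,
        UU θ i j * (∑ k, a k * g (θ - q k * θv k))) =
      (1 / 2 : ℝ) • ((1 : Matrix (Fin 2) (Fin 2) ℝ) - Dmat ρ₂ μ₂) +
        Dmat ρ₂ μ₂ * ∑ k, a k • (Qmat (q k) * UU (θv k) * Qmat (q k)) :=
  stmt3_general g hper hint ρ₂ μ₂ hmom p a hsum q hq θv
end

section
/- Let a₁, a₂ ≥ 0 with a₁ + a₂ = 1, let 0 < ρ < 1 and q₁, q₂ ∈ {−1,1}. Define Γ₁ = ½·diag( a₁ρ/(1 − a₂ρ), q₁a₁ρ/(1 − q₂a₂ρ) ) and Γ₂ = a₁ρ·diag(1,q₁)·Γ₁ + (a₂ρ/2)·diag(1,q₂). Then 4·det Γ₁ = q₁(a₁ρ)² / ((1 − a₂ρ)(1 − q₂a₂ρ)) and 4·det Γ₂ = ( (a₁ρ)²/(1 − a₂ρ) + a₂ρ ) · ( (q₁a₁ρ)²/(1 − q₂a₂ρ) + q₂a₂ρ ). These are the lag-1 and lag-2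 circular autocorrelations r₁^{(C)} and r₂^{(C)} of the MTD-AR(2) process. -/
open Real Matrix

/-- `diag(x,y)`, the 2×2 diagonal matrix with diagonal entries `x`, `y`. -/
def dg (x y : ℝ) : Matrix (Fin 2) (Fin 2) ℝ := !![x, 0; 0, y]

theorem stmt9 (a₁ a₂ ρ : ℝ) (ha₁ : 0 ≤ a₁) (ha₂ : 0 ≤ a₂) (hsum : a₁ + a₂ = 1)
    (hρ0 : 0 < ρ) (hρ1 : ρ < 1) (q₁ q₂ : ℝ)
    (hq₁ : q₁ = 1 ∨ q₁ = -1) (hq₂ : q₂ = 1 ∨ q₂ = -1)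
    (Γ₁ Γ₂ : Matrix (Fin 2) (Fin 2) ℝ)
    (hΓ₁ : Γ₁ = (1 / 2 : ℝ) • dg (a₁ * ρ / (1 - a₂ * ρ)) (q₁ * a₁ * ρ / (1 - q₂ * a₂ * ρ)))
    (hΓ₂ : Γ₂ = (a₁ * ρ) • (dg 1 q₁ * Γ₁) + (a₂ * ρ / 2) • dg 1 q₂) :
    4 * Γ₁.det = q₁ * (a₁ * ρ) ^ 2 / ((1 - a₂ * ρ) * (1 - q₂ * a₂ * ρ)) ∧
    4 * Γ₂.det = ((a₁ * ρ) ^ 2 / (1 - a₂ * ρ) + a₂ * ρ) *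
      ((q₁ * a₁ * ρ) ^ 2 / (1 - q₂ * a₂ * ρ) + q₂ * a₂ * ρ) := by
  have ha2r : a₂ * ρ < 1 := by nlinarith
  have h1 : (1 - a₂ * ρ) ≠ 0 := by nlinarith
  have h2 : (1 - q₂ * a₂ * ρ) ≠ 0 := by
    rcases hq₂ with h | h <;> subst h <;> nlinarith [mul_nonneg ha₂ hρ0.le]
  subst hΓ₁ hΓ₂
  constructor <;>
  · simp [Matrix.det_fin_two, Matrix.mul_apply, Fin.sum_univ_two, dg]
    field_simp
    ring
end

section
/- Fix s ≥ 2. For r = 1, 2 let γ⁽ʳ⁾_0, γ⁽ʳ⁾_1, …, γ⁽ʳ⁾_s be real numbers, assume the (s−1)×(s−1) Toeplitz matrix T⁽ʳ⁾ = (γ⁽ʳ⁾_{|i−j|})_{1≤i,j≤s−1} is invertible, let (ξ⁽ʳ⁾_1, …, ξ⁽ʳ⁾_{s−1}) be the unique solution of T⁽ʳ⁾ ξ = (γ⁽ʳ⁾_1, …, γ⁽ʳ⁾_{s−1})ᵀ, and assume γ⁽ʳ⁾_0 − Σ_{j=1}^{s−1} ξ⁽ʳ⁾_j γ⁽ʳ⁾_j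 ≠ 0. Set Γ_k = diag(γ⁽¹⁾_k, γ⁽²⁾_k). Then the circular partial autocorrelation ψ_s := Π_{r=1,2} (γ⁽ʳ⁾_s − Σ_{j=1}^{s−1} ξ⁽ʳ⁾_j γ⁽ʳ⁾_{s−j}) / Π_{r=1,2} (γ⁽ʳ⁾_0 − Σ_{j=1}^{s−1} ξ⁽ʳ⁾_j γ⁽ʳ⁾_j) equals det N / det M, where N is the 2s×2s block matrix whose (i,j) block is Γ_{|i−j|} for 1 ≤ j ≤ s−1 and whose (i,s) block is Γ_i (1 ≤ i ≤ s), and M is the 2s×2s block Toeplitz matrix whose (i,j) block is Γ_{|i−j|} (1 ≤ i, j ≤ s). -/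
open Matrix

private lemma bordered_det {n : ℕ} (A : Matrix (Fin n) (Fin n) ℝ) (hA : IsUnit A.det)
    (b c : Fin n → ℝ) (d : ℝ) (x : Fin n → ℝ) (hx : A.mulVec x = b) :
    (Matrix.fromBlocks A (Matrix.replicateCol (Fin 1) b) (Matrix.replicateRow (Fin 1) c)
      (Matrix.of fun _ _ : Fin 1 => d)).det = A.det * (d - ∑ j, c j * x j) := by
  have : Invertible A := A.invertibleOfIsUnitDet hA
  rw [Matrix.det_fromBlocks₁₁]
  congr 1
  have hxb : (⅟A).mulVec b = x := by
    rw [← hx, Matrix.mulVec_mulVec, invOf_mul_self, Matrix.one_mulVec]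
  rw [Matrix.det_fin_one]
  simp only [Matrix.sub_apply, Matrix.of_apply]
  congr 1
  rw [Matrix.mul_assoc, Matrix.mul_apply]
  refine Finset.sum_congr rfl fun j _ => ?_
  have : (⅟A * Matrix.replicateCol (Fin 1) b) j 0 = x j := by
    rw [Matrix.mul_apply]
    simp only [Matrix.replicateCol_apply]
    rw [← hxb]; rfl
  rw [this, Matrix.replicateRow_apply]

theorem stmt11 (s : ℕ) (hs : 2 ≤ s) (γ : Fin 2 → ℕ → ℝ)
    (T : Fin 2 → Matrix (Fin (s - 1)) (Fin (s - 1)) ℝ)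
    (hT : ∀ r, T r = Matrix.of fun i j : Fin (s - 1) =>
      γ r (((i : ℕ) : ℤ) - ((j : ℕ) : ℤ)).natAbs)
    (hTinv : ∀ r, IsUnit (T r).det)
    (ξ : Fin 2 → Fin (s - 1) → ℝ)
    (hξ : ∀ r, (T r).mulVec (ξ r) = fun i : Fin (s - 1) => γ r ((i : ℕ) + 1))
    (hden : ∀ r : Fin 2, γ r 0 - ∑ j, ξ r j * γ r ((j : ℕ) + 1) ≠ 0)
    (N M : Matrix (Fin s × Fin 2) (Fin s × Fin 2) ℝ)
    (hM : M = Matrix.of fun p q : Fin s × Fin 2 =>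
      if p.2 = q.2 then γ p.2 (((p.1 : ℕ) : ℤ) - ((q.1 : ℕ) : ℤ)).natAbs else 0)
    (hN : N = Matrix.of fun p q : Fin s × Fin 2 =>
      if p.2 = q.2 then
        (if (q.1 : ℕ) < s - 1 then γ p.2 (((p.1 : ℕ) : ℤ) - ((q.1 : ℕ) : ℤ)).natAbs
         else γ p.2 ((p.1 : ℕ) + 1))
      else 0) :
    (∏ r : Fin 2, (γ r s - ∑ j, ξ r j * γ r (s - ((j : ℕ) + 1)))) /
        (∏ r : Fin 2, (γ r 0 - ∑ j, ξ r j * γ r ((j : ℕ) + 1))) =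
      N.det / M.det := by
  have hns : s - 1 + 1 = s := by omega
  -- the per-component matrices
  set Mr : Fin 2 → Matrix (Fin s) (Fin s) ℝ := fun r => Matrix.of fun i j : Fin s =>
    γ r (((i : ℕ) : ℤ) - ((j : ℕ) : ℤ)).natAbs with hMr
  set Nr : Fin 2 → Matrix (Fin s) (Fin s) ℝ := fun r => Matrix.of fun i j : Fin s =>
    if (j : ℕ) < s - 1 then γ r (((i : ℕ) : ℤ) - ((j : ℕ) : ℤ)).natAbs
    else γ r ((i : ℕ) + 1) with hNr
  have hMdet : M.det = ∏ r : Fin 2, (Mr r).det := by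
    have : M = (Matrix.blockDiagonal Mr) := by
      ext ⟨i, k⟩ ⟨j, k'⟩
      simp only [hM, Matrix.of_apply, Matrix.blockDiagonal_apply, hMr]
    rw [this, Matrix.det_blockDiagonal]
  have hNdet : N.det = ∏ r : Fin 2, (Nr r).det := by
    have : N = (Matrix.blockDiagonal Nr) := by
      ext ⟨i, k⟩ ⟨j, k'⟩
      simp only [hN, Matrix.of_apply, Matrix.blockDiagonal_apply, hNr]
    rw [this, Matrix.det_blockDiagonal]
  -- equivalence splitting off the last index
  let e : Fin (s - 1) ⊕ Fin 1 ≃ Fin s := finSumFinEquiv.trans (finCongr hns)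
  have he1 : ∀ i : Fin (s - 1), ((e (Sum.inl i) : ℕ)) = (i : ℕ) := fun i => rfl
  have he2 : ∀ j : Fin 1, ((e (Sum.inr j) : ℕ)) = (s - 1) := by
    intro j
    have : (j : ℕ) = 0 := by omega
    simp [e, finSumFinEquiv, this]
  -- key determinant formulas
  have hMkey : ∀ r, (Mr r).det = (T r).det *
      (γ r 0 - ∑ j, ξ r j * γ r ((j : ℕ) + 1)) := by
    intro r
    rw [← Matrix.det_submatrix_equiv_self e (Mr r)]
    have hsub : (Mr r).submatrix e e = Matrix.fromBlocks (T r)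
        (Matrix.replicateCol (Fin 1) (fun i : Fin (s - 1) => γ r ((s - 1) - (i : ℕ))))
        (Matrix.replicateRow (Fin 1) (fun j : Fin (s - 1) => γ r ((s - 1) - (j : ℕ))))
        (Matrix.of fun _ _ : Fin 1 => γ r 0) := by
      ext i j
      rcases i with i | i <;> rcases j with j | j
      · simp only [Matrix.submatrix_apply, Matrix.fromBlocks_apply₁₁, hMr, hT,
          Matrix.of_apply, he1]
      · simp only [Matrix.submatrix_apply, Matrix.fromBlocks_apply₁₂, hMr,
          Matrix.of_apply, Matrix.replicateCol_apply, he1, he2]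
        have hi : (i : ℕ) < s - 1 := i.isLt
        congr 1; omega
      · simp only [Matrix.submatrix_apply, Matrix.fromBlocks_apply₂₁, hMr,
          Matrix.of_apply, Matrix.replicateRow_apply, he1, he2]
        have hj : (j : ℕ) < s - 1 := j.isLt
        congr 1; omega
      · simp only [Matrix.submatrix_apply, Matrix.fromBlocks_apply₂₂, hMr,
          Matrix.of_apply, he2]
        congr 1; omega
    rw [hsub, bordered_det (T r) (hTinv r) _ _ _ (fun j => ξ r j.rev) ?_]
    · congr 1
      congr 1
      rw [← Equiv.sum_comp (Fin.revPerm : Equiv.Perm (Fin (s - 1)))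
        (fun j => γ r ((s - 1) - (j : ℕ)) * ξ r j.rev)]
      refine Finset.sum_congr rfl fun k _ => ?_
      simp only [Fin.revPerm_apply, Fin.rev_rev]
      have hk : (k : ℕ) < (s - 1) := k.isLt
      have hrk : ((k.rev : Fin (s - 1)) : ℕ) = (s - 1) - ((k : ℕ) + 1) := Fin.val_rev k
      rw [mul_comm]
      congr 2
      omega
    · funext i
      have hi : (i : ℕ) < (s - 1) := i.isLt
      have hrev : ∀ a : Fin (s - 1), ((a.rev : Fin (s - 1)) : ℕ) = (s - 1) - ((a : ℕ) + 1) :=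
        fun a => Fin.val_rev a
      calc (T r).mulVec (fun j => ξ r j.rev) i
          = ∑ j, T r i j * ξ r j.rev := rfl
        _ = ∑ k, T r i (Fin.revPerm k) * ξ r (Fin.revPerm k).rev := by
            rw [Equiv.sum_comp (Fin.revPerm : Equiv.Perm (Fin (s - 1)))
              (fun j => T r i j * ξ r j.rev)]
        _ = ∑ k, T r i.rev k * ξ r k := by
            refine Finset.sum_congr rfl fun k _ => ?_
            simp only [Fin.revPerm_apply, Fin.rev_rev]
            congr 1
            rw [hT]
            simp only [Matrix.of_apply]
            have h1 := hrev k
            have h2 := hrev i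
            have hk : (k : ℕ) < (s - 1) := k.isLt
            congr 1
            omega
        _ = (T r).mulVec (ξ r) i.rev := rfl
        _ = γ r (((i.rev : Fin (s - 1)) : ℕ) + 1) := by rw [hξ r]
        _ = γ r ((s - 1) - (i : ℕ)) := by rw [hrev i]; congr 1; omega
  have hNkey : ∀ r, (Nr r).det = (T r).det *
      (γ r s - ∑ j, ξ r j * γ r (s - ((j : ℕ) + 1))) := by
    intro r
    rw [← Matrix.det_submatrix_equiv_self e (Nr r)]
    have hsub : (Nr r).submatrix e e = Matrix.fromBlocks (T r)
        (Matrix.replicateCol (Fin 1) (fun i : Fin (s - 1) => γ r ((i : ℕ) + 1)))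
        (Matrix.replicateRow (Fin 1) (fun j : Fin (s - 1) => γ r ((s - 1) - (j : ℕ))))
        (Matrix.of fun _ _ : Fin 1 => γ r s) := by
      ext i j
      rcases i with i | i <;> rcases j with j | j
      · simp only [Matrix.submatrix_apply, Matrix.fromBlocks_apply₁₁, hNr, hT,
          Matrix.of_apply, he1]
        have hj : (j : ℕ) < s - 1 := j.isLt
        rw [if_pos (by omega)]
      · simp only [Matrix.submatrix_apply, Matrix.fromBlocks_apply₁₂, hNr,
          Matrix.of_apply, Matrix.replicateCol_apply, he1, he2]
        rw [if_neg (by omega)]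
      · simp only [Matrix.submatrix_apply, Matrix.fromBlocks_apply₂₁, hNr,
          Matrix.of_apply, Matrix.replicateRow_apply, he1, he2]
        have hj : (j : ℕ) < s - 1 := j.isLt
        rw [if_pos (by omega)]
        congr 1; omega
      · simp only [Matrix.submatrix_apply, Matrix.fromBlocks_apply₂₂, hNr,
          Matrix.of_apply, he2]
        rw [if_neg (by omega)]
        congr 1 <;> omega
    rw [hsub, bordered_det (T r) (hTinv r) _ _ _ (ξ r) (hξ r)]
    congr 1
    congr 1
    refine Finset.sum_congr rfl fun j _ => ?_
    have hj : (j : ℕ) < (s - 1) := j.isLt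
    rw [mul_comm]
    congr 2
    omega
  -- combine
  have hTd : (∏ r : Fin 2, (T r).det) ≠ 0 := by
    apply Finset.prod_ne_zero_iff.mpr
    intro r _
    exact (hTinv r).ne_zero
  rw [hMdet, hNdet]
  have h1 : ∏ r : Fin 2, (Nr r).det = (∏ r : Fin 2, (T r).det) *
      ∏ r : Fin 2, (γ r s - ∑ j, ξ r j * γ r (s - ((j : ℕ) + 1))) := by
    rw [← Finset.prod_mul_distrib]
    exact Finset.prod_congr rfl fun r _ => hNkey r
  have h2 : ∏ r : Fin 2, (Mr r).det = (∏ r : Fin 2, (T r).det) *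
      ∏ r : Fin 2, (γ r 0 - ∑ j, ξ r j * γ r ((j : ℕ) + 1)) := by
    rw [← Finset.prod_mul_distrib]
    exact Finset.prod_congr rfl fun r _ => hMkey r
  rw [h1, h2, mul_div_mul_left _ _ hTd]
end

section
/- Let q ∈ {−1, 1}, 0 < ρ < 1 and ω ∈ ℝ. Then the series (1/(2π)) Σ_{k∈ℤ} e^{−iωk} (qρ²)^{|k|}/4 converges absolutely and its sum equals (1 − ρ²)(1 + ρ²) / (8π |1 − qρ² e^{iω}|²). That is, the spectral density of the MTD-AR(1) circular process with binding density of mean direction 0 and mean resultant length ρ is f_Θ(ω) = (1 − ρ²)(1 + ρ²) / (8π |1 − qρ² e^{iω}|²). -/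
/-!
Splitting the series at `k = 0` leaves two geometric series, in `z = qρ² e^{iω}` and in its
conjugate. They add up to the Poisson kernel `(1 - |z|²) / |1 - z|²`, and `|z|² = ρ⁴` because
`q² = 1`.
-/

open Real ComplexConjugate

theorem Complex.hasSum_poissonKernel {z : ℂ} (hz : ‖z‖ < 1) {f : ℤ → ℂ}
    (hf_nonneg : ∀ n : ℕ, f n = conj z ^ n) (hf_neg : ∀ n : ℕ, f (-(n + 1)) = z ^ (n + 1)) :
    HasSum f (((1 - ‖z‖ ^ 2) / ‖1 - z‖ ^ 2 : ℝ) : ℂ) := by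
  have hz' : ‖conj z‖ < 1 := by rwa [Complex.norm_conj]
  have hsum : HasSum f ((1 - conj z)⁻¹ + z * (1 - z)⁻¹) := by
    refine HasSum.of_nat_of_neg_add_one ?_ ?_
    · simpa only [hf_nonneg] using hasSum_geometric_of_norm_lt_one hz'
    · simpa only [hf_neg, pow_succ'] using (hasSum_geometric_of_norm_lt_one hz).mul_left z
  have h1 : 1 - z ≠ 0 := sub_ne_zero.mpr fun h => by simp [← h] at hz
  have h1' : 1 - conj z ≠ 0 := by rw [← map_one (conj), ← map_sub]; exact (map_ne_zero _).mpr h1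
  convert hsum using 1
  push_cast
  rw [← Complex.mul_conj', ← Complex.mul_conj', map_sub, map_one]
  field_simp
  ring

theorem hasSum_pow_natAbs_mul_exp {r : ℝ} (hr : |r| < 1) (ω : ℝ) :
    HasSum (fun k : ℤ => (r : ℂ) ^ k.natAbs * Complex.exp (-Complex.I * ω * k))
      (((1 - r ^ 2) / ‖1 - (r : ℂ) * Complex.exp (Complex.I * ω)‖ ^ 2 : ℝ) : ℂ) := by
  have hnorm : ‖(r : ℂ) * Complex.exp (Complex.I * ω)‖ = |r| := by
    rw [norm_mul, mul_comm Complex.I, Complex.norm_exp_ofReal_mul_I, Complex.norm_real,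
      Real.norm_eq_abs, mul_one]
  have hconj : conj ((r : ℂ) * Complex.exp (Complex.I * ω)) =
      r * Complex.exp (-Complex.I * ω) := by
    simp [← Complex.exp_conj]
  convert Complex.hasSum_poissonKernel (hnorm ▸ hr) (fun n => ?_) (fun n => ?_) using 3
  · rw [hnorm, sq_abs]
  · rw [hconj, mul_pow, ← Complex.exp_nat_mul]
    simp only [Int.natAbs_natCast, Int.cast_natCast]
    ring_nf
  · have hn : (-((n : ℤ) + 1)).natAbs = n + 1 := by omega
    rw [hn, mul_pow, ← Complex.exp_nat_mul]
    push_cast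
    ring_nf

theorem stmt14 (q ρ ω : ℝ) (hq : q = 1 ∨ q = -1) (hρ0 : 0 < ρ) (hρ1 : ρ < 1) :
    Summable (fun k : ℤ =>
      ‖(1 / (2 * π) : ℂ) * Complex.exp (-Complex.I * (ω : ℂ) * (k : ℂ)) *
        ((((q * ρ ^ 2) ^ k.natAbs / 4 : ℝ)) : ℂ)‖) ∧
    HasSum (fun k : ℤ =>
      (1 / (2 * π) : ℂ) * Complex.exp (-Complex.I * (ω : ℂ) * (k : ℂ)) *
        ((((q * ρ ^ 2) ^ k.natAbs / 4 : ℝ)) : ℂ))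
      ((((1 - ρ ^ 2) * (1 + ρ ^ 2) /
        (8 * π * ‖1 - (q : ℂ) * (ρ : ℂ) ^ 2 * Complex.exp (Complex.I * (ω : ℂ))‖ ^ 2) : ℝ)) : ℂ) := by
  refine (fun hsum => ⟨summable_norm_iff.mpr hsum.summable, hsum⟩) ?_
  have hq_abs : |q| = 1 := by rcases hq with rfl | rfl <;> norm_num
  have hr : |q * ρ ^ 2| < 1 := by
    rw [abs_mul, hq_abs, one_mul, abs_of_pos (by positivity)]
    nlinarith
  have h := (hasSum_pow_natAbs_mul_exp hr ω).mul_left (1 / (8 * π) : ℂ)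
  rw [mul_pow, ← sq_abs q, hq_abs, one_pow, one_mul] at h
  have hvalue : ((((1 - ρ ^ 2) * (1 + ρ ^ 2) /
      (8 * π * ‖1 - (q : ℂ) * (ρ : ℂ) ^ 2 * Complex.exp (Complex.I * (ω : ℂ))‖ ^ 2) : ℝ)) : ℂ) =
      1 / (8 * π) * (((1 - (ρ ^ 2) ^ 2) /
        ‖1 - ((q * ρ ^ 2 : ℝ) : ℂ) * Complex.exp (Complex.I * ω)‖ ^ 2 : ℝ) : ℂ) := by
    push_cast
    ring
  rw [hvalue]
  exact h.congr_fun fun k => by push_cast; ring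
end

section
/- Let ρ_c(1), ρ_c(2), ρ_s(1), ρ_s(2) be real numbers with ρ_c(1)² ≠ 1 and ρ_s(1)² ≠ 1. Set Γ₀ = ½ I₂, Γ₁ = ½ diag(ρ_c(1), ρ_s(1)), Γ₂ = ½ diag(ρ_c(2), ρ_s(2)). Then det( [[Γ₀, Γ₁],[Γ₁, Γ₂]] ) / det( [[Γ₀, Γ₁],[Γ₁, Γ₀]] ) = ( (ρ_c(2) − ρ_c(1)²) / (1 − ρ_c(1)²) ) · ( (ρ_s(2) − ρ_s(1)²) / (1 − ρ_s(1)²) ), where [[A,B],[C,D]] denotes the 4×4 block matrix with the indicated 2×2 blocks. -/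
open Matrix

lemma detblk (a b c d e f g h : ℝ) :
    (Matrix.fromBlocks (dg a b) (dg c d) (dg e f) (dg g h)).det
      = (a*g - c*e) * (b*h - d*f) := by
  rw [← Matrix.det_submatrix_equiv_self finSumFinEquiv.symm]
  have : (Matrix.fromBlocks (dg a b) (dg c d) (dg e f) (dg g h)).submatrix
      finSumFinEquiv.symm finSumFinEquiv.symm
      = !![a,0,c,0; 0,b,0,d; e,0,g,0; 0,f,0,h] := by
    ext i j
    fin_cases i <;> fin_cases j <;> rfl
  rw [this, Matrix.det_succ_row_zero]
  simp [Matrix.det_fin_three, Fin.sum_univ_succ, Fin.succAbove]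
  ring

lemma smul_one_eq_dg : (1 / 2 : ℝ) • (1 : Matrix (Fin 2) (Fin 2) ℝ) = dg (1/2) (1/2) := by
  ext i j; fin_cases i <;> fin_cases j <;> simp [dg]

lemma smul_dg (x y : ℝ) : (1 / 2 : ℝ) • dg x y = dg (x/2) (y/2) := by
  ext i j; fin_cases i <;> fin_cases j <;> simp [dg] <;> ring

theorem stmt15 (ρc1 ρc2 ρs1 ρs2 : ℝ) (hc : ρc1 ^ 2 ≠ 1) (hs : ρs1 ^ 2 ≠ 1)
    (Γ₀ Γ₁ Γ₂ : Matrix (Fin 2) (Fin 2) ℝ)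
    (hΓ₀ : Γ₀ = (1 / 2 : ℝ) • (1 : Matrix (Fin 2) (Fin 2) ℝ))
    (hΓ₁ : Γ₁ = (1 / 2 : ℝ) • dg ρc1 ρs1) (hΓ₂ : Γ₂ = (1 / 2 : ℝ) • dg ρc2 ρs2) :
    (Matrix.fromBlocks Γ₀ Γ₁ Γ₁ Γ₂).det / (Matrix.fromBlocks Γ₀ Γ₁ Γ₁ Γ₀).det =
      ((ρc2 - ρc1 ^ 2) / (1 - ρc1 ^ 2)) * ((ρs2 - ρs1 ^ 2) / (1 - ρs1 ^ 2)) := by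
  subst hΓ₀ hΓ₁ hΓ₂
  rw [smul_one_eq_dg, smul_dg, smul_dg, detblk, detblk]
  have hc' : 1 - ρc1 ^ 2 ≠ 0 := sub_ne_zero.mpr (Ne.symm hc)
  have hs' : 1 - ρs1 ^ 2 ≠ 0 := sub_ne_zero.mpr (Ne.symm hs)
  have hB : (1/2*(1/2:ℝ) - ρc1/2*(ρc1/2)) * (1/2*(1/2) - ρs1/2*(ρs1/2)) ≠ 0 := by
    have h1 : (1/2*(1/2:ℝ) - ρc1/2*(ρc1/2)) = (1-ρc1^2)/4 := by ring
    have h2 : (1/2*(1/2:ℝ) - ρs1/2*(ρs1/2)) = (1-ρs1^2)/4 := by ring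
    rw [h1, h2]
    exact mul_ne_zero (div_ne_zero hc' (by norm_num)) (div_ne_zero hs' (by norm_num))
  rw [show (ρc2 - ρc1 ^ 2) / (1 - ρc1 ^ 2) * ((ρs2 - ρs1 ^ 2) / (1 - ρs1 ^ 2))
      = ((ρc2 - ρc1 ^ 2) * (ρs2 - ρs1 ^ 2)) / ((1 - ρc1 ^ 2) * (1 - ρs1 ^ 2))
    from div_mul_div_comm _ _ _ _]
  rw [div_eq_div_iff hB (mul_ne_zero hc' hs')]
  ring
end

section
/- Let γ₀, γ₁, γ₂, γ₃, φ₁, φ₂ be real numbers satisfying γ₁ = φ₁γ₀ + φ₂γ₁, γ₂ = φ₁γ₁ + φ₂γ₀ and γ₃ = φ₁γ₂ + φ₂γ₁. Then the 3×3 determinant det [[γ₀, γ₁, γ₁],[γ₁, γ₀, γ₂],[γ₂, γ₁, γ₃]] = 0. (Consequently, for the MTD-AR(2) circular process the lag-3 circular partial autocorrelation ψ₃^{(C)} vanishes.) -/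
open Matrix

theorem stmt16 (γ₀ γ₁ γ₂ γ₃ φ₁ φ₂ : ℝ)
    (h₁ : γ₁ = φ₁ * γ₀ + φ₂ * γ₁) (h₂ : γ₂ = φ₁ * γ₁ + φ₂ * γ₀)
    (h₃ : γ₃ = φ₁ * γ₂ + φ₂ * γ₁) :
    Matrix.det !![γ₀, γ₁, γ₁; γ₁, γ₀, γ₂; γ₂, γ₁, γ₃] = 0 := by
  simp [Matrix.det_fin_three]
  linear_combination (γ₁ * γ₂ - γ₁ * γ₀) * h₂ - (γ₀ * γ₂ - γ₁^2) * h₁ +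
    (γ₀^2 - γ₁^2) * h₃
end
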